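/- Define, for u, u' ∈ H[[s]], the s-shifted shuffle product u ⧢_s u' := (1−e₀s)·(u ⧢ (1−e₀s)^{−1}·u'), where ⧢ is extended to H[[s]] coefficientwise. Then for all u, v, w ∈ H[[s]] one has (u ⧢ v) ⧢_s w = u ⧢_s (v ⧢_s w). -/

import Mathlib

/-! The recursion makes `sh` associative: on words by induction on the total length, since
expanding `(A ⧢ B) ⧢ C` and `A ⧢ (B ⧢ C)` along the last letters of `A`, `B`, `C` gives three
terms on each side that match by induction; and then on all of `H` by trilinearity.
Associativity passes coefficientwise to `extPS`, and because `geomE0 * (1 - e₀s) = 1` the factor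
`1 - e₀s` in front of `v ⧢_s w` cancels against the `(1 - e₀s)⁻¹` that `u ⧢_s ·` inserts. -/

noncomputable section

abbrev H : Type := FreeAlgebra ℚ (Fin 2)

def e0 : H := FreeAlgebra.ι ℚ 0
def e1 : H := FreeAlgebra.ι ℚ 1

def word (l : List (Fin 2)) : H := (l.map (FreeAlgebra.ι ℚ)).prod

def extPS (sh : H →ₗ[ℚ] H →ₗ[ℚ] H) (f g : PowerSeries H) : PowerSeries H :=
  PowerSeries.mk fun n => ∑ p ∈ Finset.HasAntidiagonal.antidiagonal n,
    sh (PowerSeries.coeff p.1 f) (PowerSeries.coeff p.2 g)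

/-- `(1 - e₀ s)⁻¹ = ∑_n e₀ⁿ sⁿ`. -/
def geomE0 : PowerSeries H := PowerSeries.mk fun n => e0 ^ n

/-- The s-shifted shuffle product `u ⧢_s u' = (1-e₀s)(u ⧢ (1-e₀s)⁻¹ u')`. -/
def shiftSh (sh : H →ₗ[ℚ] H →ₗ[ℚ] H) (u u' : PowerSeries H) : PowerSeries H :=
  (1 - PowerSeries.C e0 * PowerSeries.X) * extPS sh u (geomE0 * u')

lemma word_nil : word [] = 1 := rfl

lemma word_concat (l : List (Fin 2)) (i : Fin 2) :
    word (l ++ [i]) = word l * FreeAlgebra.ι ℚ i := by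
  simp [word]

lemma span_range_word : Submodule.span ℚ (Set.range word) = ⊤ := by
  refine Submodule.eq_top_iff'.2 fun x => ?_
  induction x using FreeAlgebra.induction with
  | grade0 r =>
    rw [Algebra.algebraMap_eq_smul_one]
    exact Submodule.smul_mem _ _ (Submodule.subset_span ⟨[], rfl⟩)
  | grade1 i => exact Submodule.subset_span ⟨[i], by simp [word]⟩
  | mul a b ha hb =>
    have hmul : Submodule.span ℚ (Set.range word) * Submodule.span ℚ (Set.range word)
        ≤ Submodule.span ℚ (Set.range word) := by
      rw [Submodule.span_mul_span]
      refine Submodule.span_mono ?_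
      rintro _ ⟨_, ⟨l, rfl⟩, _, ⟨l', rfl⟩, rfl⟩
      exact ⟨l ++ l', by simp [word]⟩
    exact hmul (Submodule.mul_mem_mul ha hb)
  | add a b ha hb => exact Submodule.add_mem _ ha hb

section Ext

variable {M : Type*} [AddCommGroup M] [Module ℚ M]

lemma linearMap_ext_word {f g : H →ₗ[ℚ] M} (h : ∀ l, f (word l) = g (word l)) : f = g :=
  LinearMap.ext_on_range span_range_word h

lemma linearMap_ext_word₂ {f g : H →ₗ[ℚ] H →ₗ[ℚ] M}
    (h : ∀ l l', f (word l) (word l') = g (word l) (word l')) : f = g :=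
  linearMap_ext_word fun l => linearMap_ext_word (h l)

end Ext

section Shuffle

variable (sh : H →ₗ[ℚ] H →ₗ[ℚ] H)
  (hOneL : ∀ l : List (Fin 2), sh (word []) (word l) = word l)
  (hOneR : ∀ l : List (Fin 2), sh (word l) (word []) = word l)
  (hRec : ∀ (l l' : List (Fin 2)) (i j : Fin 2),
    sh (word (l ++ [i])) (word (l' ++ [j])) =
      sh (word (l ++ [i])) (word l') * FreeAlgebra.ι ℚ j
      + sh (word l) (word (l' ++ [j])) * FreeAlgebra.ι ℚ i)

open FreeAlgebra

include hOneL in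
lemma one_sh (x : H) : sh 1 x = x :=
  LinearMap.congr_fun (linearMap_ext_word (f := sh 1) (g := LinearMap.id) hOneL) x

include hOneR in
lemma sh_one (x : H) : sh x 1 = x :=
  LinearMap.congr_fun (linearMap_ext_word (f := sh.flip 1) (g := LinearMap.id) hOneR) x

include hRec

lemma sh_mul_ι_mul_ι (x y : H) (i j : Fin 2) :
    sh (x * ι ℚ i) (y * ι ℚ j) = sh (x * ι ℚ i) y * ι ℚ j + sh x (y * ι ℚ j) * ι ℚ i := by
  let mulι (k : Fin 2) : H →ₗ[ℚ] H := LinearMap.mulRight ℚ (ι ℚ k)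
  have key : sh.compl₁₂ (mulι i) (mulι j) =
      (sh.compl₁₂ (mulι i) LinearMap.id).compr₂ (mulι j) + (sh.compl₂ (mulι j)).compr₂ (mulι i) :=
    linearMap_ext_word₂ fun l l' => by simpa [mulι, word_concat] using hRec l l' i j
  simpa [mulι] using LinearMap.congr_fun₂ key x y

lemma sh_sh_mul_ι (x y z : H) (i j k : Fin 2) :
    sh (sh (x * ι ℚ i) (y * ι ℚ j)) (z * ι ℚ k) =
      sh (sh (x * ι ℚ i) (y * ι ℚ j)) z * ι ℚ k + sh (sh (x * ι ℚ i) y) (z * ι ℚ k) * ι ℚ j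
        + sh (sh x (y * ι ℚ j)) (z * ι ℚ k) * ι ℚ i := by
  conv_lhs => rw [sh_mul_ι_mul_ι sh hRec x y, map_add, LinearMap.add_apply,
    sh_mul_ι_mul_ι sh hRec, sh_mul_ι_mul_ι sh hRec]
  rw [sh_mul_ι_mul_ι sh hRec x y, map_add, LinearMap.add_apply, add_mul]
  abel

lemma sh_mul_ι_sh (x y z : H) (i j k : Fin 2) :
    sh (x * ι ℚ i) (sh (y * ι ℚ j) (z * ι ℚ k)) =
      sh (x * ι ℚ i) (sh (y * ι ℚ j) z) * ι ℚ k + sh (x * ι ℚ i) (sh y (z * ι ℚ k)) * ι ℚ j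
        + sh x (sh (y * ι ℚ j) (z * ι ℚ k)) * ι ℚ i := by
  conv_lhs => rw [sh_mul_ι_mul_ι sh hRec y z, map_add,
    sh_mul_ι_mul_ι sh hRec, sh_mul_ι_mul_ι sh hRec x _ i j]
  rw [sh_mul_ι_mul_ι sh hRec y z, map_add, add_mul]
  abel

include hOneL hOneR

theorem sh_assoc_word (a b c : List (Fin 2)) :
    sh (sh (word a) (word b)) (word c) = sh (word a) (sh (word b) (word c)) := by
  rcases a.eq_nil_or_concat' with rfl | ⟨a', i, ha⟩
  · rw [hOneL, word_nil, one_sh sh hOneL]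
  rcases b.eq_nil_or_concat' with rfl | ⟨b', j, hb⟩
  · rw [hOneR, hOneL]
  rcases c.eq_nil_or_concat' with rfl | ⟨c', k, hc⟩
  · rw [word_nil, sh_one sh hOneR, sh_one sh hOneR]
  have ih₁ := sh_assoc_word (a' ++ [i]) (b' ++ [j]) c'
  have ih₂ := sh_assoc_word (a' ++ [i]) b' (c' ++ [k])
  have ih₃ := sh_assoc_word a' (b' ++ [j]) (c' ++ [k])
  rw [ha, hb, hc]
  simp only [word_concat] at ih₁ ih₂ ih₃ ⊢
  rw [sh_sh_mul_ι sh hRec, sh_mul_ι_sh sh hRec, ih₁, ih₂, ih₃]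
termination_by a.length + b.length + c.length
decreasing_by
  all_goals
    subst ha hb hc
    simp only [List.length_append, List.length_singleton]
    omega

theorem sh_assoc (x y z : H) : sh (sh x y) z = sh x (sh y z) := by
  have key : sh.compr₂ sh = ((LinearMap.llcomp ℚ H H H).comp sh).compl₂ sh :=
    linearMap_ext_word₂ fun a b => linearMap_ext_word fun c => by
      simpa using sh_assoc_word sh hOneL hOneR hRec a b c
  simpa using LinearMap.congr_fun (LinearMap.congr_fun₂ key x y) z

end Shuffle

lemma extPS_assoc {sh : H →ₗ[ℚ] H →ₗ[ℚ] H} (hsh : ∀ x y z, sh (sh x y) z = sh x (sh y z))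
    (u v w : PowerSeries H) : extPS sh (extPS sh u v) w = extPS sh u (extPS sh v w) := by
  ext n
  simp only [extPS, PowerSeries.coeff_mk, map_sum, LinearMap.sum_apply, hsh]
  rw [Finset.sum_sigma', Finset.sum_sigma']
  apply Finset.sum_nbij' (fun ⟨⟨_i, j⟩, ⟨k, l⟩⟩ ↦ ⟨(k, l + j), (l, j)⟩)
    (fun ⟨⟨i, _j⟩, ⟨k, l⟩⟩ ↦ ⟨(i + k, l), (i, k)⟩) <;>
    aesop (add simp [add_assoc])

lemma geomE0_mul_one_sub : geomE0 * (1 - PowerSeries.C e0 * PowerSeries.X) = 1 := by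
  ext (_ | n)
  · simp [geomE0]
  · simp [geomE0, mul_sub, ← mul_assoc, PowerSeries.coeff_succ_mul_X, PowerSeries.coeff_one,
      pow_succ]

theorem stmt_5
    (sh : H →ₗ[ℚ] H →ₗ[ℚ] H)
    (hOneL : ∀ l : List (Fin 2), sh (word []) (word l) = word l)
    (hOneR : ∀ l : List (Fin 2), sh (word l) (word []) = word l)
    (hRec : ∀ (l l' : List (Fin 2)) (i j : Fin 2),
      sh (word (l ++ [i])) (word (l' ++ [j])) =
        sh (word (l ++ [i])) (word l') * FreeAlgebra.ι ℚ j
        + sh (word l) (word (l' ++ [j])) * FreeAlgebra.ι ℚ i) :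
    ∀ u v w : PowerSeries H,
      shiftSh sh (extPS sh u v) w = shiftSh sh u (shiftSh sh v w) := by
  intro u v w
  have geomE0_mul_shiftSh : geomE0 * shiftSh sh v w = extPS sh v (geomE0 * w) := by
    rw [shiftSh, ← mul_assoc, geomE0_mul_one_sub, one_mul]
  calc shiftSh sh (extPS sh u v) w
      = (1 - PowerSeries.C e0 * PowerSeries.X) * extPS sh u (extPS sh v (geomE0 * w)) := by
        rw [shiftSh, extPS_assoc (sh_assoc sh hOneL hOneR hRec)]
    _ = shiftSh sh u (shiftSh sh v w) := by
        rw [← geomE0_mul_shiftSh]; rfl
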